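/- arXiv:1401.0664 — 2 statements merged into one kernel-verified Lean document; each statement's English description precedes it below -/
import Mathlib

section
/- Let σ = (σ_1 ≥ … ≥ σ_{2p}) be a weakly decreasing sequence of real numbers and let S = diag(σ). If a and b are real symmetric p×p matrices with ordered spectra σ_- and σ_+ respectively, and a + b has ordered spectrum ν = (ν_1 ≥ … ≥ ν_p), then there exists a real orthogonal 2p×2p matrix J with J² = −Id such that S + J⁻¹ S J has ordered spectrum ν^{(2)}. -/
/-!
Diagonalise `a = u diag(σ₋) uᵀ` and `b = v diag(σ₊) vᵀ` with `u, v` orthogonal, and put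
`R = vᵀ u`. Interleaving the coordinates identifies `ℝ^{2p}` with `ℝᵖ ⊕ ℝᵖ` and `diag σ` with
`S = A ⊕ B`, where `A = diag(σ₋)` and `B = diag(σ₊)`. Then `J = [[0, -Rᵀ], [R, 0]]` is a complex
structure, and `S + J⁻¹ S J` is block diagonal with blocks `A + Rᵀ B R = uᵀ (a + b) u` and
`B + R A Rᵀ = vᵀ (a + b) v`, so its spectrum is that of `a + b` with every eigenvalue doubled.
-/

open Polynomial in
/-- `μ` (weakly decreasing) is the ordered spectrum of the real matrix `A`:
the characteristic polynomial of `A` is `∏ i (X - μ i)`, i.e. the `μ i` are the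
eigenvalues of `A` with multiplicity, listed in weakly decreasing order. -/
def HasOrdSpecR {n : ℕ} (A : Matrix (Fin n) (Fin n) ℝ) (μ : Fin n → ℝ) : Prop :=
  Antitone μ ∧ A.charpoly = ∏ i, (X - C (μ i))

open Polynomial in
/-- `μ` (weakly decreasing, real) is the ordered spectrum of the complex matrix `A`. -/
def HasOrdSpecC {n : ℕ} (A : Matrix (Fin n) (Fin n) ℂ) (μ : Fin n → ℝ) : Prop :=
  Antitone μ ∧ A.charpoly = ∏ i, (X - C ((μ i : ℂ)))

/-- For `σ = (σ₁ ≥ … ≥ σ_{2p})`, `sminusR σ = σ₋ = (σ₁, σ₃, …, σ_{2p-1})`. -/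
def sminusR {p : ℕ} (σ : Fin (2 * p) → ℝ) : Fin p → ℝ :=
  fun i => σ ⟨2 * i.1, by have := i.2; omega⟩

/-- For `σ = (σ₁ ≥ … ≥ σ_{2p})`, `splusR σ = σ₊ = (σ₂, σ₄, …, σ_{2p})`. -/
def splusR {p : ℕ} (σ : Fin (2 * p) → ℝ) : Fin p → ℝ :=
  fun i => σ ⟨2 * i.1 + 1, by have := i.2; omega⟩

/-- For `ν = (ν₁ ≥ … ≥ ν_p)`, `dupR ν = ν⁽²⁾ = (ν₁, ν₁, ν₂, ν₂, …, ν_p, ν_p)`. -/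
def dupR {p : ℕ} (ν : Fin p → ℝ) : Fin (2 * p) → ℝ :=
  fun i => ν ⟨i.1 / 2, by have := i.2; omega⟩

open Polynomial Matrix

lemma exists_perm_comp_eq_of_map_univ_eq {ι α : Type*} [Fintype ι] [DecidableEq α]
    {f g : ι → α} (h : Finset.univ.val.map f = Finset.univ.val.map g) :
    ∃ π : Equiv.Perm ι, g ∘ π = f := by
  have hfiber : ∀ c, Fintype.card {i // f i = c} = Fintype.card {i // g i = c} := fun c => by
    have := congrArg (Multiset.count c) h
    simp only [Multiset.count_map] at this
    simpa only [Fintype.card_subtype, Finset.card_def, Finset.filter_val, eq_comm] using this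
  exact ⟨Equiv.ofFiberEquiv fun c => Fintype.equivOfCardEq (hfiber c),
    funext (Equiv.ofFiberEquiv_map _)⟩

lemma map_univ_eq_of_prod_X_sub_C_eq {ι R : Type*} [Fintype ι] [CommRing R] [IsDomain R]
    {f g : ι → R} (h : ∏ i, (X - C (f i)) = ∏ i, (X - C (g i))) :
    Finset.univ.val.map f = Finset.univ.val.map g := by
  simpa [Polynomial.roots_prod, Finset.prod_ne_zero_iff, X_sub_C_ne_zero] using
    congrArg Polynomial.roots h

lemma charpoly_conj_of_mul_eq_one {n R : Type*} [Fintype n] [DecidableEq n] [CommRing R]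
    {P Q : Matrix n n R} (h : P * Q = 1) (M : Matrix n n R) :
    (Q * M * P).charpoly = M.charpoly := by
  rw [charpoly_mul_comm, ← Matrix.mul_assoc, h, Matrix.one_mul]

lemma Matrix.IsSymm.exists_orthogonal_eq_conj_diagonal {n : Type*} [Fintype n] [DecidableEq n]
    {A : Matrix n n ℝ} (hA : A.IsSymm) {d : n → ℝ} (hd : A.charpoly = ∏ i, (X - C (d i))) :
    ∃ u : Matrix n n ℝ, uᵀ * u = 1 ∧ A = u * diagonal d * uᵀ := by
  have hH : A.IsHermitian := isHermitian_iff_isSymm.mpr hA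
  obtain ⟨U, hU, hAU⟩ : ∃ U : Matrix n n ℝ, Uᵀ * U = 1 ∧ A = U * diagonal hH.eigenvalues * Uᵀ :=
    ⟨hH.eigenvectorUnitary, by
      simpa only [star_eq_conjTranspose, conjTranspose_eq_transpose_of_trivial]
        using Unitary.coe_star_mul_self hH.eigenvectorUnitary, by
      simpa only [Unitary.conjStarAlgAut_apply, RCLike.ofReal_real_eq_id, Function.id_comp,
        star_eq_conjTranspose, conjTranspose_eq_transpose_of_trivial] using hH.spectral_theorem⟩
  have hchar : ∏ i, (X - C (d i)) = ∏ i, (X - C (hH.eigenvalues i)) := by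
    simpa [hd] using hH.charpoly_eq
  obtain ⟨π, hπ⟩ := exists_perm_comp_eq_of_map_univ_eq (map_univ_eq_of_prod_X_sub_C_eq hchar)
  refine ⟨U.submatrix id π, ?_, ?_⟩
  · rw [transpose_submatrix, ← submatrix_mul _ _ _ _ _ Function.bijective_id, hU,
      submatrix_one_equiv]
  · rw [← hπ, ← submatrix_diagonal_equiv, transpose_submatrix,
      submatrix_mul_equiv U _ id π π, submatrix_mul_equiv _ Uᵀ id π id, submatrix_id_id, ← hAU]

section ComplexStructure

variable {m α : Type*} [Fintype m] [CommRing α]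

def Matrix.IsComplexStructure [DecidableEq m] (J : Matrix m m α) : Prop :=
  Jᵀ * J = 1 ∧ J * J = -1

lemma Matrix.IsComplexStructure.reindex [DecidableEq m] {n : Type*} [Fintype n] [DecidableEq n]
    {J : Matrix m m α} (hJ : J.IsComplexStructure) (e : m ≃ n) :
    (reindex e e J).IsComplexStructure := by
  constructor
  · simp [reindex_apply, transpose_submatrix, hJ.1]
  · simp [reindex_apply, hJ.2, submatrix_neg]

lemma isComplexStructure_fromBlocks [DecidableEq m] {R : Matrix m m α} (hR : Rᵀ * R = 1) :
    (fromBlocks 0 (-Rᵀ) R 0).IsComplexStructure := by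
  have hR' : R * Rᵀ = 1 := mul_eq_one_comm.mp hR
  constructor
  · simp [fromBlocks_transpose, fromBlocks_multiply, hR, hR']
  · rw [← fromBlocks_one, fromBlocks_neg]
    simp [fromBlocks_multiply, hR, hR']

lemma reindex_add_transpose_mul_mul {n : Type*} [Fintype n] (e : m ≃ n) (S J : Matrix m m α) :
    reindex e e S + (reindex e e J)ᵀ * reindex e e S * reindex e e J
      = reindex e e (S + Jᵀ * S * J) := by
  simp [reindex_apply, transpose_submatrix, submatrix_add]

lemma fromBlocks_add_transpose_mul_mul (A B R : Matrix m m α) :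
    fromBlocks A 0 0 B + (fromBlocks 0 (-Rᵀ) R 0)ᵀ * fromBlocks A 0 0 B * fromBlocks 0 (-Rᵀ) R 0
      = fromBlocks (A + Rᵀ * B * R) 0 0 (B + R * A * Rᵀ) := by
  simp [fromBlocks_transpose, fromBlocks_multiply, fromBlocks_add, Matrix.mul_assoc]

lemma charpoly_fromBlocks_add_transpose_mul_mul [DecidableEq m] {A B u v : Matrix m m α}
    (hu : uᵀ * u = 1) (hv : vᵀ * v = 1) :
    (fromBlocks A 0 0 B + (fromBlocks 0 (-(vᵀ * u)ᵀ) (vᵀ * u) 0)ᵀ * fromBlocks A 0 0 B *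
      fromBlocks 0 (-(vᵀ * u)ᵀ) (vᵀ * u) 0).charpoly = (u * A * uᵀ + v * B * vᵀ).charpoly ^ 2 := by
  have hA : A + (vᵀ * u)ᵀ * B * (vᵀ * u) = uᵀ * (u * A * uᵀ + v * B * vᵀ) * u := by
    simp only [Matrix.mul_add, Matrix.add_mul, transpose_mul, transpose_transpose,
      ← Matrix.mul_assoc, hu]
    simp only [Matrix.mul_assoc, hu, Matrix.one_mul, Matrix.mul_one]
  have hB : B + vᵀ * u * A * (vᵀ * u)ᵀ = vᵀ * (u * A * uᵀ + v * B * vᵀ) * v := by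
    simp only [Matrix.mul_add, Matrix.add_mul, transpose_mul, transpose_transpose,
      ← Matrix.mul_assoc, hv]
    simp only [Matrix.mul_assoc, hv, Matrix.one_mul, Matrix.mul_one, add_comm]
  rw [fromBlocks_add_transpose_mul_mul, charpoly_fromBlocks_zero₁₂, hA, hB,
    charpoly_conj_of_mul_eq_one (mul_eq_one_comm.mp hu),
    charpoly_conj_of_mul_eq_one (mul_eq_one_comm.mp hv), sq]

end ComplexStructure

section Interleave

variable {p : ℕ}

def interleave (p : ℕ) : Fin p ⊕ Fin p ≃ Fin (2 * p) where
  toFun := Sum.elim (fun i => ⟨2 * i, by omega⟩) (fun i => ⟨2 * i + 1, by omega⟩)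
  invFun j := if j.1 % 2 = 0 then .inl ⟨j / 2, by omega⟩ else .inr ⟨j / 2, by omega⟩
  left_inv := by rintro (i | i) <;> grind
  right_inv j := by grind

lemma reindex_interleave_fromBlocks_diagonal (σ : Fin (2 * p) → ℝ) :
    reindex (interleave p) (interleave p)
      (fromBlocks (diagonal (sminusR σ)) 0 0 (diagonal (splusR σ))) = diagonal σ := by
  have hσ : Sum.elim (sminusR σ) (splusR σ) = σ ∘ interleave p := by
    funext i
    rcases i with i | i <;> rfl
  rw [fromBlocks_diagonal, reindex_apply, submatrix_diagonal_equiv, hσ, Function.comp_assoc,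
    Equiv.self_comp_symm, Function.comp_id]

lemma dupR_interleave_inl (ν : Fin p → ℝ) (i : Fin p) : dupR ν (interleave p (.inl i)) = ν i :=
  congrArg ν (Fin.ext (show 2 * i.1 / 2 = i by omega))

lemma dupR_interleave_inr (ν : Fin p → ℝ) (i : Fin p) : dupR ν (interleave p (.inr i)) = ν i :=
  congrArg ν (Fin.ext (show (2 * i.1 + 1) / 2 = i by omega))

lemma prod_dupR {M : Type*} [CommMonoid M] (f : ℝ → M) (ν : Fin p → ℝ) :
    ∏ i, f (dupR ν i) = (∏ i, f (ν i)) ^ 2 := by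
  rw [← (interleave p).prod_comp, Fintype.prod_sum_type]
  simp only [dupR_interleave_inl, dupR_interleave_inr, sq]

lemma Antitone.dupR {ν : Fin p → ℝ} (hν : Antitone ν) : Antitone (dupR ν) :=
  fun _ _ hij => hν (Fin.mk_le_mk.mpr (Nat.div_le_div_right hij))

end Interleave

open Matrix in
theorem exists_complex_structure_realizing_general (p : ℕ)
    (σ : Fin (2 * p) → ℝ)
    (a b : Matrix (Fin p) (Fin p) ℝ) (ha : a.IsSymm) (hb : b.IsSymm)
    (hsa : HasOrdSpecR a (sminusR σ)) (hsb : HasOrdSpecR b (splusR σ))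
    (ν : Fin p → ℝ) (hν : HasOrdSpecR (a + b) ν) :
    ∃ J : Matrix (Fin (2 * p)) (Fin (2 * p)) ℝ, Jᵀ * J = 1 ∧ J * J = -1 ∧
      HasOrdSpecR (Matrix.diagonal σ + J⁻¹ * Matrix.diagonal σ * J) (dupR ν) := by
  obtain ⟨u, hu, rfl⟩ := ha.exists_orthogonal_eq_conj_diagonal hsa.2
  obtain ⟨v, hv, rfl⟩ := hb.exists_orthogonal_eq_conj_diagonal hsb.2
  have hR : (vᵀ * u)ᵀ * (vᵀ * u) = 1 := by
    rw [transpose_mul, transpose_transpose, Matrix.mul_assoc, ← Matrix.mul_assoc v,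
      mul_eq_one_comm.mp hv, Matrix.one_mul, hu]
  obtain ⟨hJo, hJsq⟩ := (isComplexStructure_fromBlocks hR).reindex (interleave p)
  refine ⟨_, hJo, hJsq, hν.1.dupR, ?_⟩
  rw [inv_eq_left_inv hJo, ← reindex_interleave_fromBlocks_diagonal,
    reindex_add_transpose_mul_mul, charpoly_reindex,
    charpoly_fromBlocks_add_transpose_mul_mul hu hv, hν.2]
  exact (prod_dupR (fun x => X - C x) ν).symm

open Matrix in
/-- Let `σ = (σ₁ ≥ … ≥ σ_{2p})` be real, `S = diag σ`.  If
`a, b` are real symmetric `p×p` matrices with ordered spectra `σ₋, σ₊` and `a + b`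
has ordered spectrum `ν`, then there is a complex structure `J` (real orthogonal
with `J² = -Id`) such that `S + J⁻¹ S J` has ordered spectrum `ν⁽²⁾`. -/
theorem exists_complex_structure_realizing (p : ℕ)
    (σ : Fin (2 * p) → ℝ) (hσ : Antitone σ)
    (a b : Matrix (Fin p) (Fin p) ℝ) (ha : a.IsSymm) (hb : b.IsSymm)
    (hsa : HasOrdSpecR a (sminusR σ)) (hsb : HasOrdSpecR b (splusR σ))
    (ν : Fin p → ℝ) (hν : HasOrdSpecR (a + b) ν) :
    ∃ J : Matrix (Fin (2 * p)) (Fin (2 * p)) ℝ, Jᵀ * J = 1 ∧ J * J = -1 ∧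
      HasOrdSpecR (Matrix.diagonal σ + J⁻¹ * Matrix.diagonal σ * J) (dupR ν) :=
  exists_complex_structure_realizing_general p σ a b ha hb hsa hsb ν hν
end

section
/- Let σ = (σ_1 ≥ … ≥ σ_{2p}) be a partition with at most 2p parts. Then τ(σ_+, σ_-) = (2σ_1, 2σ_2, …, 2σ_{2p}) (computed with r = p), and τ(σ, σ) = (2σ_1, 2σ_1, 2σ_2, 2σ_2, …, 2σ_{2p}, 2σ_{2p}) (computed with r = 2p). -/
/-- A partition: a weakly decreasing, finitely supported sequence of nonnegative
integers (indexed from 0, so `f 0` is the first part `λ₁`). -/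
def IsPartition (f : ℕ → ℕ) : Prop := Antitone f ∧ ∃ N, ∀ n, N ≤ n → f n = 0

/-- For `σ = (σ₁ ≥ σ₂ ≥ …)`, `sminus σ = σ₋ = (σ₁, σ₃, σ₅, …)` (0-indexed). -/
def sminus (σ : ℕ → ℕ) : ℕ → ℕ := fun k => σ (2 * k)

/-- For `σ = (σ₁ ≥ σ₂ ≥ …)`, `splus σ = σ₊ = (σ₂, σ₄, σ₆, …)` (0-indexed). -/
def splus (σ : ℕ → ℕ) : ℕ → ℕ := fun k => σ (2 * k + 1)

/-- `dup ν = ν⁽²⁾ = (ν₁, ν₁, ν₂, ν₂, …)`: every part of `ν` is duplicated. -/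
def dup (ν : ℕ → ℕ) : ℕ → ℕ := fun k => ν (k / 2)

/-- Cell `(i, j)` (row `i`, column `j`, 0-based) lies in the skew diagram `ν/λ`. -/
def InSkew (lam ν : ℕ → ℕ) (c : ℕ × ℕ) : Prop := lam c.1 ≤ c.2 ∧ c.2 < ν c.1

/-- `T` is a Littlewood–Richardson filling of shape `ν/λ` and weight `μ`:
a semistandard skew tableau of shape `ν/λ` (entries `k+1` encode the label `k+1`,
cells outside the shape carry `0`) whose content is `μ` and whose reverse reading
word (rows top to bottom, each row right to left) is a lattice word. -/
def IsLRFilling (lam mu ν : ℕ → ℕ) (T : ℕ × ℕ → ℕ) : Prop :=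
  (∀ c, ¬ InSkew lam ν c → T c = 0) ∧
  (∀ c, InSkew lam ν c → 1 ≤ T c) ∧
  (∀ i j j', InSkew lam ν (i, j) → InSkew lam ν (i, j') → j ≤ j' →
    T (i, j) ≤ T (i, j')) ∧
  (∀ i j, InSkew lam ν (i, j) → InSkew lam ν (i + 1, j) → T (i, j) < T (i + 1, j)) ∧
  (∀ k, Nat.card {c : ℕ × ℕ | T c = k + 1} = mu k) ∧
  (∀ r c k l, k < l →
    Nat.card {x : ℕ × ℕ | T x = l + 1 ∧ (x.1 < r ∨ (x.1 = r ∧ c ≤ x.2))} ≤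
    Nat.card {x : ℕ × ℕ | T x = k + 1 ∧ (x.1 < r ∨ (x.1 = r ∧ c ≤ x.2))})

/-- The Littlewood–Richardson coefficient `c^ν_{λμ}`: the number of
Littlewood–Richardson fillings of shape `ν/λ` and weight `μ`. -/
noncomputable def LR (lam mu ν : ℕ → ℕ) : ℕ :=
  Nat.card {T : ℕ × ℕ → ℕ // IsLRFilling lam mu ν T}

/-- The operation `τ` of Fomin–Fulton–Li–Poon (computed with parameter `r`):
for partitions `λ, μ` with at most `r` parts, the increasing sequence
`I(λ, r) = (λ_r + 1 < … < λ_1 + r)` has elements `λ_{k+1} + r - k` (`k = 0, …, r-1`,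
0-indexed parts); `τ(λ, μ)` is the partition with at most `2r` parts whose associated
increasing sequence `I(τ(λ,μ), 2r)` is the increasing rearrangement of
`{2i - 1 : i ∈ I(λ, r)} ∪ {2j : j ∈ I(μ, r)}`. -/
def tauFFLP (r : ℕ) (lam mu : ℕ → ℕ) : ℕ → ℕ := fun m =>
  if m < 2 * r then
    (((Multiset.range r).map (fun k => 2 * (lam k + (r - k)) - 1) +
      (Multiset.range r).map (fun k => 2 * (mu k + (r - k)))).sort (· ≤ ·)).getD
      (2 * r - 1 - m) 0 - (2 * r - m)
  else 0

/-!
If `ν` is weakly decreasing with odd-indexed parts `2λ` and even-indexed parts `2μ`, then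
`f n = ν n + (2r - n)` takes the values `2i - 1`, `i ∈ I(λ, r)`, at odd `n` and `2j`,
`j ∈ I(μ, r)`, at even `n`; it is strictly decreasing, so the increasing rearrangement of
these values is `f` read backwards, which is exactly `I(ν, 2r)`, i.e. `τ(λ, μ) = ν`. Both
claims are this with `ν = 2σ` and `ν = (2σ)⁽²⁾`.
-/

namespace Multiset

theorem map_range_two_mul {α : Type*} (h : ℕ → α) (n : ℕ) :
    (range (2 * n)).map h =
      (range n).map (fun k => h (2 * k + 1)) + (range n).map (fun k => h (2 * k)) := by
  induction n with
  | zero => simp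
  | succ n ih =>
    rw [show 2 * (n + 1) = 2 * n + 1 + 1 by ring, range_succ, range_succ, range_succ,
      map_cons, map_cons, map_cons, map_cons, ih, cons_add, add_cons, cons_swap]

theorem sort_map_range_of_strictAntiOn {β : Type*} [LinearOrder β] {f : ℕ → β} {n : ℕ}
    (hf : StrictAntiOn f (Set.Iio n)) :
    ((range n).map f).sort (· ≤ ·) = (List.range n).reverse.map f := by
  have hcoe : (range n).map f = ↑((List.range n).reverse.map f) := by
    rw [← map_coe, coe_reverse]; rfl
  rw [hcoe, coe_sort, List.mergeSort_eq_self]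
  rw [List.pairwise_map, List.pairwise_reverse]
  refine List.pairwise_lt_range.imp_of_mem fun ha hb hab => ?_
  simpa using (hf (List.mem_range.mp ha) (List.mem_range.mp hb) hab).le

end Multiset

theorem tauFFLP_of_le {r m : ℕ} (lam mu : ℕ → ℕ) (hm : 2 * r ≤ m) : tauFFLP r lam mu m = 0 :=
  if_neg (by omega)

theorem tauFFLP_eq_of_interleave {r : ℕ} {lam mu ν : ℕ → ℕ}
    (hν : AntitoneOn ν (Set.Iio (2 * r)))
    (hodd : ∀ k < r, ν (2 * k + 1) = 2 * lam k) (heven : ∀ k < r, ν (2 * k) = 2 * mu k)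
    (hzero : ∀ m, 2 * r ≤ m → ν m = 0) :
    tauFFLP r lam mu = ν := by
  funext m
  by_cases hm : m < 2 * r
  swap
  · rw [tauFFLP_of_le lam mu (not_lt.mp hm), hzero m (not_lt.mp hm)]
  set f : ℕ → ℕ := fun n => ν n + (2 * r - n)
  have hf : StrictAntiOn f (Set.Iio (2 * r)) := fun i hi j hj hij => by
    have := hν hi hj hij.le
    simp only [Set.mem_Iio, f] at *
    omega
  have hlam : (Multiset.range r).map (fun k => 2 * (lam k + (r - k)) - 1) =
      (Multiset.range r).map (fun k => f (2 * k + 1)) :=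
    Multiset.map_congr rfl fun k hk => by
      have hk := Multiset.mem_range.mp hk
      have := hodd k hk
      simp only [f]
      omega
  have hmu : (Multiset.range r).map (fun k => 2 * (mu k + (r - k))) =
      (Multiset.range r).map (fun k => f (2 * k)) :=
    Multiset.map_congr rfl fun k hk => by
      have hk := Multiset.mem_range.mp hk
      have := heven k hk
      simp only [f]
      omega
  have hidx : 2 * r - 1 - m < ((List.range (2 * r)).reverse.map f).length := by
    simp only [List.length_map, List.length_reverse, List.length_range]
    omega
  rw [tauFFLP, if_pos hm, hlam, hmu, ← Multiset.map_range_two_mul,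
    Multiset.sort_map_range_of_strictAntiOn hf, List.getD_eq_getElem _ _ hidx]
  simp only [List.getElem_map, List.getElem_reverse, List.getElem_range, List.length_range, f]
  rw [show 2 * r - 1 - (2 * r - 1 - m) = m by omega]
  omega

/-- For a partition `σ = (σ₁ ≥ … ≥ σ_{2p})` with at most `2p`
parts, `τ(σ₊, σ₋) = (2σ₁, 2σ₂, …, 2σ_{2p})` (computed with `r = p`) and
`τ(σ, σ) = (2σ₁, 2σ₁, 2σ₂, 2σ₂, …, 2σ_{2p}, 2σ_{2p})` (computed with `r = 2p`). -/
theorem tau_of_interlaced (p : ℕ) (σ : ℕ → ℕ)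
    (hσ : IsPartition σ) (hσparts : ∀ n, 2 * p ≤ n → σ n = 0) :
    (∀ m, tauFFLP p (splus σ) (sminus σ) m = 2 * σ m) ∧
    (∀ m, tauFFLP (2 * p) σ σ m = 2 * σ (m / 2)) := by
  have hanti : Antitone σ := hσ.1
  constructor
  · refine congrFun (tauFFLP_eq_of_interleave ?_ (fun _ _ => rfl) (fun _ _ => rfl) ?_)
    · exact fun i _ j _ hij => Nat.mul_le_mul_left 2 (hanti hij)
    · intro m hm
      rw [hσparts m hm]
  · refine congrFun (tauFFLP_eq_of_interleave ?_ (fun k _ => ?_) (fun k _ => ?_) ?_)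
    · exact fun i _ j _ hij => Nat.mul_le_mul_left 2 (hanti (Nat.div_le_div_right hij))
    · simp only [Nat.mul_add_div two_pos, Nat.div_eq_of_lt one_lt_two, add_zero]
    · simp only [Nat.mul_div_cancel_left k two_pos]
    · intro m hm
      rw [hσparts (m / 2) (by omega)]
end
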